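/- Let G be a group with elements y₀, …, y_N satisfying the recursion y_{i+1} = yᵢ·y_{i-1}⁻¹·yᵢ for c+1 ≤ i ≤ c+b-1. Then y_{c+j} = (y_{c+b-1}·y_{c+b}⁻¹)^{b-j-1}·y_{c+b-1} = y_{c+b-1}·(y_{c+b}⁻¹·y_{c+b-1})^{b-j-1} for all 0 ≤ j ≤ b-1. -/
import Mathlib


/-- If y_c,…,y_{c+b} satisfy y_{i+1} = yᵢ·y_{i-1}⁻¹·yᵢ for c+1 ≤ i ≤ c+b-1, then
y_{c+j} = (y_{c+b-1}·y_{c+b}⁻¹)^{b-j-1}·y_{c+b-1} = y_{c+b-1}·(y_{c+b}⁻¹·y_{c+b-1})^{b-j-1}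
for all 0 ≤ j ≤ b-1. -/
theorem rewrite_y_right (G : Type*) [Group G] (c b : ℕ) (y : ℕ → G)
    (hrec : ∀ i : ℕ, c + 1 ≤ i → i + 1 ≤ c + b →
      y (i + 1) = y i * (y (i - 1))⁻¹ * y i) :
    ∀ j : ℕ, j + 1 ≤ b →
      y (c + j) = (y (c + b - 1) * (y (c + b))⁻¹) ^ (b - j - 1) * y (c + b - 1) ∧
      y (c + j) = y (c + b - 1) * ((y (c + b))⁻¹ * y (c + b - 1)) ^ (b - j - 1) := by
  have key : ∀ k : ℕ, ∀ j : ℕ, j + 1 ≤ b → b - j - 1 = k →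
      y (c + j) = (y (c + b - 1) * (y (c + b))⁻¹) ^ k * y (c + b - 1) := by
    intro k
    induction k using Nat.strong_induction_on with
    | _ k ih =>
      intro j hj hk
      match k, ih with
      | 0, _ =>
        have hjb : j = b - 1 := by omega
        subst hjb
        have e : c + (b - 1) = c + b - 1 := by omega
        rw [e]; simp
      | 1, _ =>
        have hjb : j = b - 2 := by omega
        subst hjb
        have h := hrec (c + b - 1) (by omega) (by omega)
        have e1 : c + b - 1 + 1 = c + b := by omega
        have e2 : c + b - 1 - 1 = c + (b - 2) := by omega
        rw [e1, e2] at h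
        rw [pow_one]
        rw [h]
        group
      | (k + 2), ih =>
        have h := hrec (c + j + 1) (by omega) (by omega)
        have e1 : c + j + 1 + 1 = c + (j + 2) := by omega
        have e2 : c + j + 1 - 1 = c + j := by omega
        have e3 : c + j + 1 = c + (j + 1) := by omega
        rw [e1, e2, e3] at h
        have h1 := ih (k + 1) (by omega) (j + 1) (by omega) (by omega)
        have h2 := ih k (by omega) (j + 2) (by omega) (by omega)
        have hy : y (c + j) = y (c + (j + 1)) * (y (c + (j + 2)))⁻¹ * y (c + (j + 1)) := by
          rw [h]; group
        rw [hy, h1, h2]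
        group
  intro j hj
  have hl := key (b - j - 1) j hj rfl
  refine ⟨hl, ?_⟩
  have hs : SemiconjBy (y (c + b - 1)) ((y (c + b))⁻¹ * y (c + b - 1))
      (y (c + b - 1) * (y (c + b))⁻¹) := by
    unfold SemiconjBy; group
  have := (hs.pow_right (b - j - 1)).eq
  rw [hl, ← this]
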